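/- arXiv:1611.07242 — 5 statements merged into one kernel-verified Lean document; each statement's English description precedes it below -/
import Mathlib

section
/- Let P(θ₁,θ₂) = 1 + p₁θ₁ + p₂θ₂ + p₁₂θ₁θ₂ with p₁, p₂, p₁₂ > 0, and let c = (p₁p₂ - p₁₂)/p₁₂² > 0 and λ > 0. Then the function f(x₁,x₂) = [p₁₂^{-λ}/Γ(λ)²] · exp(-(p₂/p₁₂)x₁ - (p₁/p₁₂)x₂) · (x₁x₂)^{λ-1} · ₀F₁(;λ; c x₁ x₂) on (0,∞)², extended by 0 elsewhere, is a probability density whose Laplace transform satisfies ∫∫ e^{-θ₁x₁ - θ₂x₂} f(x₁,x₂) dx₁dx₂ = [P(θ₁,θ₂)]^{-λ} for θ₁, θ₂ ≥ 0. -/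
open MeasureTheory Real Set

noncomputable def poch (a : ℝ) (n : ℕ) : ℝ := (ascPochhammer ℝ n).eval a

/-- The confluent hypergeometric limit function `₀F₁(;λ;z)`. -/
noncomputable def F01 (b z : ℝ) : ℝ := ∑' k : ℕ, z ^ k / (poch b k * k.factorial)

/-!
Expand `₀F₁` into its power series: every term is nonnegative, so Tonelli allows integrating
term by term in `ℝ≥0∞`. Integrating out `x₂` first, the `k`-th term produces
`Γ(λ + k) = Γ(λ) (λ)ₖ`, which cancels the Pochhammer symbol, and the series resums to an
exponential: `∫ t^(λ-1) ₀F₁(λ; z t) e^(-b t) dt = Γ(λ) b^(-λ) e^(z/b)`. What remains in `x₁` is a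
Gamma integral with rate `a - c/b`, so the quadrant integral of
`e^(-a x₁ - b x₂) (x₁ x₂)^(λ-1) ₀F₁(λ; c x₁ x₂)` is `Γ(λ)² (ab - c)^(-λ)`. For
`a = θ₁ + p₂/p₁₂`, `b = θ₂ + p₁/p₁₂` one has `p₁₂ (ab - c) = P(θ₁, θ₂)`, and `θ = 0` gives the
normalisation.
-/

lemma poch_succ (a : ℝ) (k : ℕ) : poch a (k + 1) = poch a k * (a + k) :=
  ascPochhammer_succ_eval k a

lemma poch_pos {a : ℝ} (ha : 0 < a) (k : ℕ) : 0 < poch a k :=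
  ascPochhammer_pos k a ha

lemma min_one_le_poch {a : ℝ} (ha : 0 < a) (k : ℕ) : min a 1 ≤ poch a k := by
  induction k with
  | zero => simp [poch]
  | succ k ih =>
    rw [poch_succ]
    rcases Nat.eq_zero_or_pos k with rfl | hk
    · simp [poch]
    · have h1 : (1 : ℝ) ≤ a + k := by
        have : (1 : ℝ) ≤ k := by exact_mod_cast hk
        linarith
      nlinarith [poch_pos ha k]

lemma Gamma_add_nat_eq_mul_poch {a : ℝ} (ha : 0 < a) (k : ℕ) :
    Gamma (a + k) = Gamma a * poch a k := by
  induction k with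
  | zero => simp [poch]
  | succ k ih =>
    rw [Nat.cast_succ, ← add_assoc, Gamma_add_one (by positivity), ih, poch_succ]
    ring

lemma summable_F01 {b : ℝ} (hb : 0 < b) (z : ℝ) :
    Summable fun k : ℕ => z ^ k / (poch b k * k.factorial) := by
  refine ((Real.summable_pow_div_factorial |z|).mul_left (min b 1)⁻¹).of_norm_bounded
    fun k => ?_
  have hmin : 0 < min b 1 := lt_min hb one_pos
  have hden : 0 ≤ poch b k * k.factorial := by have := poch_pos hb k; positivity
  rw [norm_div, norm_pow, Real.norm_eq_abs, Real.norm_of_nonneg hden]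
  calc |z| ^ k / (poch b k * k.factorial) ≤ |z| ^ k / (min b 1 * k.factorial) := by
        gcongr; exact min_one_le_poch hb k
    _ = (min b 1)⁻¹ * (|z| ^ k / k.factorial) := by ring

@[fun_prop]
lemma measurable_F01 (b : ℝ) : Measurable (F01 b) :=
  Measurable.tsum fun k => by fun_prop

lemma F01_nonneg {b z : ℝ} (hb : 0 < b) (hz : 0 ≤ z) : 0 ≤ F01 b z :=
  tsum_nonneg fun k => by have := poch_pos hb k; positivity

lemma lintegral_rpow_mul_exp_neg_mul_Ioi {s r : ℝ} (hs : 0 < s) (hr : 0 < r) :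
    ∫⁻ t in Ioi 0, ENNReal.ofReal (t ^ (s - 1) * exp (-(r * t))) =
      ENNReal.ofReal ((1 / r) ^ s * Gamma s) := by
  rw [← integral_rpow_mul_exp_neg_mul_Ioi hs hr, ofReal_integral_eq_lintegral_ofReal]
  · have := integrableOn_rpow_mul_exp_neg_mul_rpow (s := s - 1) (by linarith) zero_lt_one hr
    simp only [rpow_one, neg_mul] at this
    exact this
  · filter_upwards [ae_restrict_mem measurableSet_Ioi] with t ht
    exact mul_nonneg (rpow_nonneg (le_of_lt ht) _) (exp_pos _).le

lemma ofReal_rpow_mul_F01_mul_exp_eq_tsum {lam z b t : ℝ} (hlam : 0 < lam) (hz : 0 ≤ z)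
    (ht : 0 < t) :
    ENNReal.ofReal (t ^ (lam - 1) * F01 lam (z * t) * exp (-(b * t))) =
      ∑' k : ℕ, ENNReal.ofReal
        (z ^ k / (poch lam k * k.factorial) * (t ^ (lam + k - 1) * exp (-(b * t)))) := by
  have hterm : ∀ k : ℕ,
      (z * t) ^ k / (poch lam k * k.factorial) * (t ^ (lam - 1) * exp (-(b * t))) =
      z ^ k / (poch lam k * k.factorial) * (t ^ (lam + k - 1) * exp (-(b * t))) := fun k => by
    rw [add_sub_right_comm, rpow_add ht, rpow_natCast]
    ring
  have hsum := ((summable_F01 hlam (z * t)).hasSum.mul_right (t ^ (lam - 1) * exp (-(b * t))))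
  rw [← ENNReal.ofReal_tsum_of_nonneg (fun k => by have := poch_pos hlam k; positivity)
    ((funext hterm) ▸ hsum.summable), ← tsum_congr hterm, hsum.tsum_eq, F01]
  ring_nf

lemma lintegral_rpow_mul_F01_mul_exp {lam z b : ℝ} (hlam : 0 < lam) (hz : 0 ≤ z) (hb : 0 < b) :
    ∫⁻ t in Ioi 0, ENNReal.ofReal (t ^ (lam - 1) * F01 lam (z * t) * exp (-(b * t))) =
      ENNReal.ofReal (Gamma lam * (1 / b) ^ lam * exp (z / b)) := by
  have hmoment : ∀ k : ℕ, ∫⁻ t in Ioi 0, ENNReal.ofReal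
        (z ^ k / (poch lam k * k.factorial) * (t ^ (lam + k - 1) * exp (-(b * t)))) =
      ENNReal.ofReal (Gamma lam * (1 / b) ^ lam * ((z / b) ^ k / k.factorial)) := fun k => by
    have hcoef : 0 ≤ z ^ k / (poch lam k * k.factorial) := by
      have := poch_pos hlam k; positivity
    simp_rw [ENNReal.ofReal_mul hcoef]
    rw [lintegral_const_mul' _ _ ENNReal.ofReal_ne_top,
      lintegral_rpow_mul_exp_neg_mul_Ioi (by positivity) hb, ← ENNReal.ofReal_mul hcoef,
      Gamma_add_nat_eq_mul_poch hlam, rpow_add (by positivity), rpow_natCast]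
    congr 1
    have := (poch_pos hlam k).ne'
    field_simp
    ring
  rw [setLIntegral_congr_fun measurableSet_Ioi
      fun t ht => ofReal_rpow_mul_F01_mul_exp_eq_tsum (b := b) hlam hz ht,
    lintegral_tsum fun k => by fun_prop, tsum_congr hmoment,
    ← ENNReal.ofReal_tsum_of_nonneg (fun k => by positivity)
      ((Real.summable_pow_div_factorial _).mul_left _),
    tsum_mul_left, Real.exp_eq_exp_ℝ, NormedSpace.exp_eq_tsum_div]

lemma lintegral_exp_mul_rpow_mul_F01_quadrant {lam a b c : ℝ} (hlam : 0 < lam) (hc : 0 ≤ c)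
    (hb : 0 < b) (hcab : c < a * b) :
    ∫⁻ x in Ioi 0 ×ˢ Ioi 0, ENNReal.ofReal
        (exp (-(a * x.1) - b * x.2) * (x.1 * x.2) ^ (lam - 1) * F01 lam (c * x.1 * x.2)) =
      ENNReal.ofReal (Gamma lam ^ 2 * (a * b - c) ^ (-lam)) := by
  have hr : 0 < a - c / b := by rw [sub_pos, div_lt_iff₀ hb]; linarith
  have hK : 0 ≤ Gamma lam * (1 / b) ^ lam := by have := Gamma_pos_of_pos hlam; positivity
  have hinner : ∀ x₁ ∈ Ioi (0 : ℝ), ∫⁻ x₂ in Ioi 0, ENNReal.ofReal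
        (exp (-(a * x₁) - b * x₂) * (x₁ * x₂) ^ (lam - 1) * F01 lam (c * x₁ * x₂)) =
      ENNReal.ofReal (Gamma lam * (1 / b) ^ lam) *
        ENNReal.ofReal (x₁ ^ (lam - 1) * exp (-((a - c / b) * x₁))) := by
    intro x₁ hx₁
    have hx₁' : (0 : ℝ) < x₁ := hx₁
    have hsplit : ∀ x₂ ∈ Ioi (0 : ℝ), ENNReal.ofReal
          (exp (-(a * x₁) - b * x₂) * (x₁ * x₂) ^ (lam - 1) * F01 lam (c * x₁ * x₂)) =
        ENNReal.ofReal (x₁ ^ (lam - 1) * exp (-(a * x₁))) *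
          ENNReal.ofReal (x₂ ^ (lam - 1) * F01 lam (c * x₁ * x₂) * exp (-(b * x₂))) := by
      intro x₂ hx₂
      rw [← ENNReal.ofReal_mul (by positivity), mul_rpow hx₁'.le (le_of_lt hx₂), sub_eq_add_neg,
        exp_add]
      ring_nf
    rw [setLIntegral_congr_fun measurableSet_Ioi hsplit,
      lintegral_const_mul' _ _ ENNReal.ofReal_ne_top, lintegral_rpow_mul_F01_mul_exp hlam (by positivity) hb, ← ENNReal.ofReal_mul (by positivity),
      ← ENNReal.ofReal_mul hK]
    congr 1
    rw [show -((a - c / b) * x₁) = -(a * x₁) + c * x₁ / b by ring, exp_add]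
    ring
  rw [Measure.volume_eq_prod, ← Measure.prod_restrict, lintegral_prod _ (by fun_prop),
    setLIntegral_congr_fun measurableSet_Ioi hinner, lintegral_const_mul' _ _ ENNReal.ofReal_ne_top,
    lintegral_rpow_mul_exp_neg_mul_Ioi hlam hr, ← ENNReal.ofReal_mul hK]
  congr 1
  have hab : a * b - c = b * (a - c / b) := by field_simp
  rw [hab, rpow_neg (by positivity), ← inv_rpow (by positivity), mul_inv,
    mul_rpow (by positivity) (by positivity), one_div, one_div]
  ring

lemma integral_indicator_exp_mul_rpow_mul_F01_quadrant {lam a b c : ℝ} (hlam : 0 < lam)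
    (hc : 0 ≤ c) (hb : 0 < b) (hcab : c < a * b) :
    ∫ x : ℝ × ℝ, (Ioi 0 ×ˢ Ioi 0).indicator (fun x : ℝ × ℝ =>
        exp (-(a * x.1) - b * x.2) * (x.1 * x.2) ^ (lam - 1) * F01 lam (c * x.1 * x.2)) x =
      Gamma lam ^ 2 * (a * b - c) ^ (-lam) := by
  have hquadrant : MeasurableSet (Ioi (0 : ℝ) ×ˢ Ioi (0 : ℝ)) :=
    measurableSet_Ioi.prod measurableSet_Ioi
  have hnonneg : ∀ᵐ x ∂volume.restrict (Ioi (0 : ℝ) ×ˢ Ioi (0 : ℝ)), 0 ≤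
      exp (-(a * x.1) - b * x.2) * (x.1 * x.2) ^ (lam - 1) * F01 lam (c * x.1 * x.2) := by
    filter_upwards [ae_restrict_mem hquadrant] with x ⟨hx₁, hx₂⟩
    rw [mem_Ioi] at hx₁ hx₂
    have := F01_nonneg hlam (by positivity : 0 ≤ c * x.1 * x.2)
    positivity
  rw [integral_indicator hquadrant, integral_eq_lintegral_of_nonneg_ae hnonneg (by fun_prop),
    lintegral_exp_mul_rpow_mul_F01_quadrant hlam hc hb hcab,
    ENNReal.toReal_ofReal (by have := Gamma_pos_of_pos hlam; have := sub_pos.2 hcab; positivity)]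

theorem bivariate_gamma_density (p₁ p₂ p₁₂ lam : ℝ)
    (hp₁ : 0 < p₁) (hp₂ : 0 < p₂) (hp₁₂ : 0 < p₁₂) (hlam : 0 < lam)
    (hc : 0 < (p₁ * p₂ - p₁₂) / p₁₂ ^ 2)
    (c : ℝ) (hcdef : c = (p₁ * p₂ - p₁₂) / p₁₂ ^ 2)
    (f : ℝ → ℝ → ℝ)
    (hf : ∀ x₁ x₂ : ℝ, f x₁ x₂ =
      Set.indicator (Ioi (0:ℝ) ×ˢ Ioi (0:ℝ))
        (fun x : ℝ × ℝ =>
          p₁₂ ^ (-lam) / (Real.Gamma lam) ^ 2 *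
            Real.exp (-(p₂ / p₁₂) * x.1 - (p₁ / p₁₂) * x.2) *
            (x.1 * x.2) ^ (lam - 1) * F01 lam (c * x.1 * x.2)) (x₁, x₂)) :
    (∫ x : ℝ × ℝ, f x.1 x.2 = 1) ∧
      ∀ θ₁ θ₂ : ℝ, 0 ≤ θ₁ → 0 ≤ θ₂ →
        ∫ x : ℝ × ℝ, Real.exp (-(θ₁ * x.1) - θ₂ * x.2) * f x.1 x.2 =
          (1 + p₁ * θ₁ + p₂ * θ₂ + p₁₂ * θ₁ * θ₂) ^ (-lam) := by
  have laplace : ∀ θ₁ θ₂ : ℝ, 0 ≤ θ₁ → 0 ≤ θ₂ →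
      ∫ x : ℝ × ℝ, exp (-(θ₁ * x.1) - θ₂ * x.2) * f x.1 x.2 =
        (1 + p₁ * θ₁ + p₂ * θ₂ + p₁₂ * θ₁ * θ₂) ^ (-lam) := by
    intro θ₁ θ₂ hθ₁ hθ₂
    set a := θ₁ + p₂ / p₁₂ with ha
    set b := θ₂ + p₁ / p₁₂ with hb
    have hP : 1 + p₁ * θ₁ + p₂ * θ₂ + p₁₂ * θ₁ * θ₂ = p₁₂ * (a * b - c) := by
      rw [ha, hb, hcdef]; field_simp; ring
    have hcab : c < a * b := by
      have : 0 < p₁₂ * (a * b - c) := hP ▸ by positivity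
      linarith [pos_of_mul_pos_right this hp₁₂.le]
    have hintegrand : (fun x : ℝ × ℝ => exp (-(θ₁ * x.1) - θ₂ * x.2) * f x.1 x.2) =
        fun x => p₁₂ ^ (-lam) / Gamma lam ^ 2 * (Ioi 0 ×ˢ Ioi 0).indicator (fun x : ℝ × ℝ =>
          exp (-(a * x.1) - b * x.2) * (x.1 * x.2) ^ (lam - 1) * F01 lam (c * x.1 * x.2)) x := by
      funext x
      by_cases hx : x ∈ Ioi (0 : ℝ) ×ˢ Ioi (0 : ℝ)
      · rw [hf, indicator_of_mem hx, indicator_of_mem hx,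
          show -(a * x.1) - b * x.2 = -(θ₁ * x.1) - θ₂ * x.2 + (-(p₂ / p₁₂) * x.1 - p₁ / p₁₂ * x.2)
            by ring, exp_add]
        ring
      · rw [hf, indicator_of_notMem hx, indicator_of_notMem hx, mul_zero, mul_zero]
    rw [hintegrand, integral_const_mul, integral_indicator_exp_mul_rpow_mul_F01_quadrant hlam
      (hcdef ▸ hc.le) (by positivity) hcab, hP, mul_rpow hp₁₂.le (by linarith)]
    have := (Gamma_pos_of_pos hlam).ne'
    field_simp
  exact ⟨by simpa using laplace 0 0 le_rfl le_rfl, laplace⟩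
end

section
/- Let λ₁ ≥ λ > 0, λ₂ ≥ λ, and 0 ≤ r ≤ 1. Then C(v₁,v₂) = v₁v₂ · [1 - r(1 - v₁^{1/λ₁})(1 - v₂^{1/λ₂})]^{-λ} is 2-increasing on [0,1]², i.e., for all 0 ≤ u₁ ≤ u₂ ≤ 1 and 0 ≤ v₁ ≤ v₂ ≤ 1, C(u₂,v₂) - C(u₂,v₁) - C(u₁,v₂) + C(u₁,v₁) ≥ 0. -/
open Real Set

/-! Substituting `x = u ^ (1/λ₁)`, `y = v ^ (1/λ₂)`, which is increasing on `[0,1]`, turns `C` into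
`F x y = x^λ₁ y^λ₂ D^(-λ)` with `D = 1 - r(1-x)(1-y)`, so it suffices that `F` is 2-increasing.
Since `∂F/∂y = y^(λ₂-1) G` with `G = x^λ₁ D^(-λ-1) (λ₂ D - λ r (1-x) y)`, the rectangle increment
of `F` is nonnegative as soon as `G` is increasing in `x`. The numerator of `∂G/∂x` becomes a sum
of manifestly nonnegative terms after writing `λ₁ = λ + (λ₁ - λ)`. -/

lemma rpow_eq_rpow_sub_one_mul {a : ℝ} (ha : a ≠ 0) (p : ℝ) : a ^ p = a ^ (p - 1) * a := by
  rw [← rpow_add_one ha, sub_add_cancel]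

lemma sub_le_sub_of_hasDerivAt_le {f g f' g' : ℝ → ℝ} {a b : ℝ} (hab : a ≤ b)
    (hf : ContinuousOn f (Icc a b)) (hg : ContinuousOn g (Icc a b))
    (hf' : ∀ y ∈ Ioo a b, HasDerivAt f (f' y) y) (hg' : ∀ y ∈ Ioo a b, HasDerivAt g (g' y) y)
    (hle : ∀ y ∈ Ioo a b, f' y ≤ g' y) :
    f b - f a ≤ g b - g a := by
  have hmono : MonotoneOn (g - f) (Icc a b) := by
    refine monotoneOn_of_hasDerivWithinAt_nonneg (f' := g' - f') (convex_Icc a b) (hg.sub hf)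
      (fun y hy => ?_) (fun y hy => ?_) <;> rw [interior_Icc] at hy
    · exact ((hg' y hy).sub (hf' y hy)).hasDerivWithinAt
    · exact sub_nonneg.2 (hle y hy)
  have := hmono (left_mem_Icc.2 hab) (right_mem_Icc.2 hab) hab
  simp only [Pi.sub_apply] at this
  linarith

-- For `λ = λ₁ = λ₂ = 1`, `C` is the Ali–Mikhail–Haq copula.
namespace AMH

def denom (r x y : ℝ) : ℝ := 1 - r * (1 - x) * (1 - y)

def numer (lam lam₂ r x y : ℝ) : ℝ := lam₂ * denom r x y - lam * r * (1 - x) * y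

noncomputable def transformed (lam lam₁ lam₂ r x y : ℝ) : ℝ :=
  x ^ lam₁ * y ^ lam₂ * denom r x y ^ (-lam)

noncomputable def yDerivFactor (lam lam₁ lam₂ r x y : ℝ) : ℝ :=
  x ^ lam₁ * denom r x y ^ (-lam - 1) * numer lam lam₂ r x y

def xDerivNumer (lam lam₁ lam₂ r x y : ℝ) : ℝ :=
  lam₁ * denom r x y * numer lam lam₂ r x y
    - (lam + 1) * x * (r * (1 - y)) * numer lam lam₂ r x y
    + x * denom r x y * (lam₂ * (r * (1 - y)) + lam * r * y)

variable {lam lam₁ lam₂ r x y : ℝ}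

lemma denom_comm (r x y : ℝ) : denom r x y = denom r y x := by
  unfold denom; ring

lemma le_denom (hr0 : 0 ≤ r) (hr1 : r ≤ 1) (hx1 : x ≤ 1) (hy0 : 0 ≤ y) : x ≤ denom r x y := by
  have : 0 ≤ (1 - x) * (1 - r * (1 - y)) := mul_nonneg (by linarith) (by nlinarith)
  unfold denom; linarith

lemma denom_pos_of_left (hr0 : 0 ≤ r) (hr1 : r ≤ 1) (hx0 : 0 < x) (hx1 : x ≤ 1) (hy0 : 0 ≤ y) :
    0 < denom r x y :=
  hx0.trans_le (le_denom hr0 hr1 hx1 hy0)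

lemma denom_pos_of_right (hr0 : 0 ≤ r) (hr1 : r ≤ 1) (hx0 : 0 ≤ x) (hy0 : 0 < y) (hy1 : y ≤ 1) :
    0 < denom r x y :=
  denom_comm r y x ▸ denom_pos_of_left hr0 hr1 hy0 hy1 hx0

lemma numer_nonneg (hlam : 0 ≤ lam) (hlam₂ : lam ≤ lam₂) (hr0 : 0 ≤ r) (hr1 : r ≤ 1)
    (hx0 : 0 ≤ x) (hx1 : x ≤ 1) (hy0 : 0 ≤ y) : 0 ≤ numer lam lam₂ r x y := by
  have hD : 0 ≤ denom r x y := hx0.trans (le_denom hr0 hr1 hx1 hy0)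
  have : numer lam lam₂ r x y = (lam₂ - lam) * denom r x y + lam * (1 - r * (1 - x)) := by
    unfold numer denom; ring
  rw [this]
  have : 0 ≤ 1 - r * (1 - x) := by nlinarith
  positivity

lemma xDerivNumer_nonneg (hlam : 0 ≤ lam) (hlam₁ : lam ≤ lam₁) (hlam₂ : lam ≤ lam₂)
    (hr0 : 0 ≤ r) (hr1 : r ≤ 1) (hx0 : 0 ≤ x) (hx1 : x ≤ 1) (hy0 : 0 ≤ y) (hy1 : y ≤ 1) :
    0 ≤ xDerivNumer lam lam₁ lam₂ r x y := by
  have hD : 0 ≤ denom r x y := hx0.trans (le_denom hr0 hr1 hx1 hy0)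
  have hP := numer_nonneg hlam hlam₂ hr0 hr1 hx0 hx1 hy0
  have : 0 ≤ 1 - r * (1 - y) := by nlinarith
  have : 0 ≤ r * (1 - x) * (1 - y) := by
    have := sub_nonneg.2 hx1; have := sub_nonneg.2 hy1; positivity
  have : 0 ≤ lam₁ - lam := sub_nonneg.2 hlam₁
  calc 0 ≤ (lam₁ - lam) * denom r x y * numer lam lam₂ r x y
        + lam * (1 - r * (1 - y)) * numer lam lam₂ r x y
        + lam * x * r * y * (r * (1 - x) * (1 - y) + denom r x y) := by positivity
    _ = _ := by unfold xDerivNumer numer denom; ring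

lemma hasDerivAt_denom_left : HasDerivAt (fun x => denom r x y) (r * (1 - y)) x :=
  ((((hasDerivAt_id' x).const_sub 1).const_mul r).mul_const (1 - y)).const_sub 1 |>.congr_deriv
    (by ring)

lemma hasDerivAt_denom_right : HasDerivAt (denom r x) (r * (1 - x)) y :=
  (((hasDerivAt_id' y).const_sub 1).const_mul (r * (1 - x))).const_sub 1 |>.congr_deriv
    (by ring)

lemma hasDerivAt_numer_left :
    HasDerivAt (fun x => numer lam lam₂ r x y) (lam₂ * (r * (1 - y)) + lam * r * y) x :=
  (hasDerivAt_denom_left.const_mul lam₂).sub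
    ((((hasDerivAt_id' x).const_sub 1).const_mul (lam * r)).mul_const y) |>.congr_deriv (by ring)

lemma hasDerivAt_transformed_right (hy : y ≠ 0) (hD : denom r x y ≠ 0) :
    HasDerivAt (transformed lam lam₁ lam₂ r x)
      (y ^ (lam₂ - 1) * yDerivFactor lam lam₁ lam₂ r x y) y := by
  have hpow : HasDerivAt (fun y => y ^ lam₂) (lam₂ * y ^ (lam₂ - 1)) y :=
    hasDerivAt_rpow_const (Or.inl hy)
  have hden : HasDerivAt (fun y => denom r x y ^ (-lam))
      (r * (1 - x) * (-lam) * denom r x y ^ (-lam - 1)) y :=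
    hasDerivAt_denom_right.rpow_const (Or.inl hD)
  refine ((hpow.const_mul (x ^ lam₁)).mul hden).congr_deriv ?_
  rw [yDerivFactor, numer, rpow_eq_rpow_sub_one_mul hy lam₂,
    rpow_eq_rpow_sub_one_mul hD (-lam)]
  ring

lemma hasDerivAt_yDerivFactor_left (hx : x ≠ 0) (hD : denom r x y ≠ 0) :
    HasDerivAt (fun x => yDerivFactor lam lam₁ lam₂ r x y)
      (x ^ (lam₁ - 1) * denom r x y ^ (-lam - 2) * xDerivNumer lam lam₁ lam₂ r x y) x := by
  have hpow : HasDerivAt (fun x => x ^ lam₁) (lam₁ * x ^ (lam₁ - 1)) x :=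
    hasDerivAt_rpow_const (Or.inl hx)
  have hden : HasDerivAt (fun x => denom r x y ^ (-lam - 1))
      (r * (1 - y) * (-lam - 1) * denom r x y ^ (-lam - 1 - 1)) x :=
    hasDerivAt_denom_left.rpow_const (Or.inl hD)
  refine ((hpow.mul hden).mul hasDerivAt_numer_left).congr_deriv ?_
  simp only [Pi.mul_apply]
  rw [rpow_eq_rpow_sub_one_mul hx lam₁, rpow_eq_rpow_sub_one_mul hD (-lam - 1),
    show -lam - 1 - 1 = -lam - 2 by ring, xDerivNumer]
  ring

lemma continuousOn_yDerivFactor_left (hlam₁ : 0 ≤ lam₁) (hr0 : 0 ≤ r) (hr1 : r ≤ 1)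
    (hy0 : 0 < y) (hy1 : y ≤ 1) :
    ContinuousOn (fun x => yDerivFactor lam lam₁ lam₂ r x y) (Icc 0 1) := by
  intro x hx
  have hD := denom_pos_of_right hr0 hr1 hx.1 hy0 hy1
  exact ((continuousAt_rpow_const x lam₁ (Or.inr hlam₁)).mul
    (hasDerivAt_denom_left.continuousAt.rpow_const (Or.inl hD.ne'))).mul
    hasDerivAt_numer_left.continuousAt |>.continuousWithinAt

lemma monotoneOn_yDerivFactor_left (hlam : 0 ≤ lam) (hlam₁ : lam ≤ lam₁) (hlam₂ : lam ≤ lam₂)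
    (hr0 : 0 ≤ r) (hr1 : r ≤ 1) (hy0 : 0 < y) (hy1 : y ≤ 1) :
    MonotoneOn (fun x => yDerivFactor lam lam₁ lam₂ r x y) (Icc 0 1) := by
  refine monotoneOn_of_hasDerivWithinAt_nonneg (convex_Icc 0 1)
    (f' := fun x => x ^ (lam₁ - 1) * denom r x y ^ (-lam - 2) * xDerivNumer lam lam₁ lam₂ r x y)
    (continuousOn_yDerivFactor_left (hlam.trans hlam₁) hr0 hr1 hy0 hy1) (fun x hx => ?_)
    (fun x hx => ?_) <;> rw [interior_Icc] at hx
  · have hD := denom_pos_of_right hr0 hr1 hx.1.le hy0 hy1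
    exact (hasDerivAt_yDerivFactor_left hx.1.ne' hD.ne').hasDerivWithinAt
  · have hD := denom_pos_of_right hr0 hr1 hx.1.le hy0 hy1
    exact mul_nonneg (mul_nonneg (rpow_nonneg hx.1.le _) (rpow_nonneg hD.le _))
      (xDerivNumer_nonneg hlam hlam₁ hlam₂ hr0 hr1 hx.1.le hx.2.le hy0.le hy1)

lemma continuousOn_transformed_right (hlam₁ : lam₁ ≠ 0) (hlam₂ : 0 ≤ lam₂) (hr0 : 0 ≤ r)
    (hr1 : r ≤ 1) (hx0 : 0 ≤ x) (hx1 : x ≤ 1) :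
    ContinuousOn (transformed lam lam₁ lam₂ r x) (Icc 0 1) := by
  rcases hx0.eq_or_lt with rfl | hx0
  · exact (continuousOn_const (c := (0 : ℝ))).congr fun y _ => by
      simp [transformed, zero_rpow hlam₁]
  · intro y hy
    have hD := denom_pos_of_left hr0 hr1 hx0 hx1 hy.1
    exact (continuousAt_const.mul (continuousAt_rpow_const y lam₂ (Or.inr hlam₂))).mul
      (hasDerivAt_denom_right.continuousAt.rpow_const (Or.inl hD.ne')) |>.continuousWithinAt

lemma transformed_rpow_one_div {u v : ℝ} (hu : 0 ≤ u) (hv : 0 ≤ v) (hlam₁ : lam₁ ≠ 0)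
    (hlam₂ : lam₂ ≠ 0) :
    transformed lam lam₁ lam₂ r (u ^ (1 / lam₁)) (v ^ (1 / lam₂)) =
      u * v * (1 - r * (1 - u ^ (1 / lam₁)) * (1 - v ^ (1 / lam₂))) ^ (-lam) := by
  rw [transformed, denom, ← rpow_mul hu, ← rpow_mul hv, one_div_mul_cancel hlam₁,
    one_div_mul_cancel hlam₂, rpow_one, rpow_one]

theorem transformed_rect_nonneg {x₁ x₂ y₁ y₂ : ℝ} (hlam : 0 < lam) (hlam₁ : lam ≤ lam₁)
    (hlam₂ : lam ≤ lam₂) (hr0 : 0 ≤ r) (hr1 : r ≤ 1)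
    (hx₁ : 0 ≤ x₁) (hx : x₁ ≤ x₂) (hx₂ : x₂ ≤ 1) (hy₁ : 0 ≤ y₁) (hy : y₁ ≤ y₂) (hy₂ : y₂ ≤ 1) :
    0 ≤ transformed lam lam₁ lam₂ r x₂ y₂ - transformed lam lam₁ lam₂ r x₂ y₁
      - transformed lam lam₁ lam₂ r x₁ y₂ + transformed lam lam₁ lam₂ r x₁ y₁ := by
  have hcont (x : ℝ) (hx : x ∈ Icc 0 1) :
      ContinuousOn (transformed lam lam₁ lam₂ r x) (Icc y₁ y₂) :=
    (continuousOn_transformed_right (hlam.trans_le hlam₁).ne' (hlam.le.trans hlam₂) hr0 hr1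
      hx.1 hx.2).mono (Icc_subset_Icc hy₁ hy₂)
  have hderiv (x : ℝ) (hx : x ∈ Icc 0 1) (y : ℝ) (hy : y ∈ Ioo y₁ y₂) :
      HasDerivAt (transformed lam lam₁ lam₂ r x)
        (y ^ (lam₂ - 1) * yDerivFactor lam lam₁ lam₂ r x y) y :=
    hasDerivAt_transformed_right (hy₁.trans_lt hy.1).ne'
      (denom_pos_of_right hr0 hr1 hx.1 (hy₁.trans_lt hy.1) (hy.2.le.trans hy₂)).ne'
  have hx₁' : x₁ ∈ Icc (0 : ℝ) 1 := ⟨hx₁, hx.trans hx₂⟩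
  have hx₂' : x₂ ∈ Icc (0 : ℝ) 1 := ⟨hx₁.trans hx, hx₂⟩
  have := sub_le_sub_of_hasDerivAt_le hy (hcont x₁ hx₁') (hcont x₂ hx₂') (hderiv x₁ hx₁')
    (hderiv x₂ hx₂') fun y hy => mul_le_mul_of_nonneg_left
      (monotoneOn_yDerivFactor_left hlam.le hlam₁ hlam₂ hr0 hr1 (hy₁.trans_lt hy.1)
        (hy.2.le.trans hy₂) hx₁' hx₂' hx) (rpow_nonneg (hy₁.trans hy.1.le) _)
  linarith

end AMH

theorem copula_two_increasing (lam lam₁ lam₂ r : ℝ)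
    (hlam : 0 < lam) (hlam₁ : lam ≤ lam₁) (hlam₂ : lam ≤ lam₂)
    (hr0 : 0 ≤ r) (hr1 : r ≤ 1)
    (C : ℝ → ℝ → ℝ)
    (hC : ∀ v₁ v₂ : ℝ, C v₁ v₂ =
      v₁ * v₂ * (1 - r * (1 - v₁ ^ (1 / lam₁)) * (1 - v₂ ^ (1 / lam₂))) ^ (-lam)) :
    ∀ u₁ u₂ v₁ v₂ : ℝ, 0 ≤ u₁ → u₁ ≤ u₂ → u₂ ≤ 1 → 0 ≤ v₁ → v₁ ≤ v₂ → v₂ ≤ 1 →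
      0 ≤ C u₂ v₂ - C u₂ v₁ - C u₁ v₂ + C u₁ v₁ := by
  intro u₁ u₂ v₁ v₂ hu₁ hu hu₂ hv₁ hv hv₂
  have h₁ : 0 < 1 / lam₁ := one_div_pos.2 (hlam.trans_le hlam₁)
  have h₂ : 0 < 1 / lam₂ := one_div_pos.2 (hlam.trans_le hlam₂)
  have hC' (u v : ℝ) (hu : 0 ≤ u) (hv : 0 ≤ v) :
      C u v = AMH.transformed lam lam₁ lam₂ r (u ^ (1 / lam₁)) (v ^ (1 / lam₂)) := by
    rw [hC, AMH.transformed_rpow_one_div hu hv (hlam.trans_le hlam₁).ne'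
      (hlam.trans_le hlam₂).ne']
  rw [hC' u₂ v₂ (hu₁.trans hu) (hv₁.trans hv), hC' u₂ v₁ (hu₁.trans hu) hv₁,
    hC' u₁ v₂ hu₁ (hv₁.trans hv), hC' u₁ v₁ hu₁ hv₁]
  exact AMH.transformed_rect_nonneg hlam hlam₁ hlam₂ hr0 hr1
    (rpow_nonneg hu₁ _) (rpow_le_rpow hu₁ hu h₁.le) (rpow_le_one (hu₁.trans hu) hu₂ h₁.le)
    (rpow_nonneg hv₁ _) (rpow_le_rpow hv₁ hv h₂.le) (rpow_le_one (hv₁.trans hv) hv₂ h₂.le)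
end

section
/- Let P(θ) = Σ_{T ⊆ [n]} p_T θ^T be an affine polynomial in n variables with p_∅ = 1 and p_i ≠ 0 for all i ∈ [n]. Then P(θ) = Σ_{T ⊆ [n]} (-1)^{|T|} P(-(1/p)·1_T) · (u - 1)^T · u^{[n]\T}, where u_i = 1 + p_i θ_i, (1/p·1_T)_i = 1/p_i if i ∈ T and 0 otherwise, (u-1)^T = Π_{t∈T}(u_t - 1), and u^S = Π_{s∈S} u_s. In particular the coefficient of (u-1)^T u^{[n]\T} vanishes for |T| = 1 and equals 1 for T = ∅. -/
/-!
In the coordinates `x_i = p_{i} θ_i` the polynomial is `∑_S c_S x^S` with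
`c_S = p_S / ∏_{i ∈ S} p_{i}`, and `P(-(1/p)·1_T) = ∑_{S ⊆ T} c_S (-1)^|S|`. After exchanging the
two sums, the coefficient of `c_S (-1)^|S|` on the right is
`∑_{T ⊇ S} (-x)^T (1 + x)^{Tᶜ} = (-x)^S ∏_{i ∉ S} (-x_i + (1 + x_i)) = (-x)^S`.
-/

open Finset

variable {ι R : Type*} [CommRing R]

lemma prod_ite_mem_zero [DecidableEq ι] (S T : Finset ι) (f : ι → R) :
    ∏ i ∈ S, (if i ∈ T then f i else 0) = if S ⊆ T then ∏ i ∈ S, f i else 0 := by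
  split_ifs with h
  · exact prod_congr rfl fun i hi => if_pos (h hi)
  · obtain ⟨i, hiS, hiT⟩ := not_subset.mp h
    exact prod_eq_zero hiS (if_neg hiT)

variable [Fintype ι]

def affinePoly (c : Finset ι → R) (x : ι → R) : R :=
  ∑ S, c S * ∏ i ∈ S, x i

lemma affinePoly_mul_left (c : Finset ι → R) (a x : ι → R) :
    affinePoly c (fun i => a i * x i) = affinePoly (fun S => c S * ∏ i ∈ S, a i) x := by
  simp only [affinePoly, prod_mul_distrib, mul_assoc]

variable [DecidableEq ι]

lemma prod_eq_sum_superset_prod_mul_prod_one_sub (S : Finset ι) (y : ι → R) :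
    ∏ i ∈ S, y i = ∑ T with S ⊆ T, (∏ i ∈ T, y i) * ∏ i ∈ Tᶜ, (1 - y i) := by
  have hsplit : ∏ i ∈ S, y i = ∏ i, (y i + if i ∈ Sᶜ then 1 - y i else 0) := by
    rw [← univ_inter S, ← prod_ite_mem, univ_inter]
    refine prod_congr rfl fun i _ => ?_
    by_cases hi : i ∈ S <;> simp [hi]
  rw [hsplit, prod_add, sum_filter]
  refine sum_congr (by simp) fun T _ => ?_
  rw [← compl_eq_univ_sdiff, prod_ite_mem_zero]
  simp only [compl_subset_compl, mul_ite, mul_zero]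

lemma affinePoly_indicator (c : Finset ι → R) (T : Finset ι) (y : ι → R) :
    affinePoly c (fun i => if i ∈ T then y i else 0) = ∑ S ∈ T.powerset, c S * ∏ i ∈ S, y i := by
  simp only [affinePoly, prod_ite_mem_zero, mul_ite, mul_zero, ← sum_filter]
  congr 1
  ext S
  simp

theorem affinePoly_eq_sum_basis (c : Finset ι → R) (x : ι → R) :
    affinePoly c x = ∑ T, (-1) ^ #T * affinePoly c (fun i => if i ∈ T then -1 else 0) *
      (∏ i ∈ T, x i) * ∏ i ∈ Tᶜ, (1 + x i) := by
  have hbasis : ∀ T : Finset ι, (-1) ^ #T * (∏ i ∈ T, x i) * ∏ i ∈ Tᶜ, (1 + x i) =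
      (∏ i ∈ T, -x i) * ∏ i ∈ Tᶜ, (1 - -x i) := by
    intro T
    simp only [prod_neg, sub_neg_eq_add]
  calc affinePoly c x = ∑ S, c S * ∏ i ∈ S, (-1) * -x i := by simp [affinePoly]
    _ = ∑ S, c S * (∏ i ∈ S, (-1 : R)) *
          ∑ T with S ⊆ T, (∏ i ∈ T, -x i) * ∏ i ∈ Tᶜ, (1 - -x i) := by
      simp only [prod_mul_distrib, ← prod_eq_sum_superset_prod_mul_prod_one_sub, mul_assoc]
    _ = ∑ T, (∑ S ∈ T.powerset, c S * ∏ i ∈ S, (-1 : R)) *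
          ((∏ i ∈ T, -x i) * ∏ i ∈ Tᶜ, (1 - -x i)) := by
      simp only [mul_sum, sum_mul]
      exact sum_comm' (by simp)
    _ = _ := by
      refine sum_congr rfl fun T _ => ?_
      rw [affinePoly_indicator, ← hbasis]
      ring

theorem affine_polynomial_basis_expansion
    {n : ℕ} (p : Finset (Fin n) → ℝ)
    (hpe : p ∅ = 1) (hpi : ∀ i : Fin n, p {i} ≠ 0)
    (P : (Fin n → ℝ) → ℝ)
    (hP : ∀ θ : Fin n → ℝ, P θ = ∑ T : Finset (Fin n), p T * ∏ i ∈ T, θ i) :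
    (∀ θ : Fin n → ℝ,
        P θ = ∑ T : Finset (Fin n),
          (-1 : ℝ) ^ T.card *
            P (fun i => if i ∈ T then -(1 / p {i}) else 0) *
            (∏ t ∈ T, ((1 + p {t} * θ t) - 1)) *
            ∏ s ∈ Tᶜ, (1 + p {s} * θ s)) ∧
    (∀ i : Fin n, P (fun j => if j ∈ ({i} : Finset (Fin n)) then -(1 / p {i}) else 0) = 0) ∧
    P (fun _ => 0) = 1 := by
  have hPc : P = affinePoly p := funext hP
  subst hPc
  set c : Finset (Fin n) → ℝ := fun S => p S * ∏ i ∈ S, (p {i})⁻¹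
  have hrescale : ∀ x, affinePoly c x = affinePoly p (fun i => (p {i})⁻¹ * x i) :=
    fun x => (affinePoly_mul_left p _ x).symm
  refine ⟨fun θ => ?_, fun i => ?_, ?_⟩
  · have hθ : θ = fun i => (p {i})⁻¹ * (p {i} * θ i) := by
      ext i; field_simp [hpi i]
    have hvertex : ∀ T : Finset (Fin n), affinePoly c (fun i => if i ∈ T then -1 else 0) =
        affinePoly p (fun i => if i ∈ T then -(1 / p {i}) else 0) := by
      intro T
      rw [hrescale]
      congr 1; ext i; split_ifs <;> simp
    conv_lhs => rw [hθ, ← hrescale, affinePoly_eq_sum_basis]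
    simp only [hvertex, add_sub_cancel_left]
  · have hpow : ({i} : Finset (Fin n)).powerset = {∅, {i}} := by
      ext S; simp [subset_singleton_iff]
    rw [affinePoly_indicator, hpow, sum_pair (singleton_ne_empty i).symm]
    simp [hpe, hpi i]
  · simpa [hpe] using affinePoly_indicator p ∅ (fun _ => 0)
end

section
/- Let P be an affine polynomial in n variables with P(0)=1 and p_i > 0, let Λ = (λ, λ₁, …, λₙ) with λ_i ≥ λ > 0, and let γ_{(P,Λ)} be the distribution with Laplace transform [P(θ)]^{-λ} Π_{i=1}^n (1+p_iθ_i)^{-(λ_i-λ)}. Then the Laplace copula of γ_{(P,Λ)} is C(v) = v^{[n]} · [1 + Σ_{T⊆[n], |T|>1} (-1)^{|T|} P(-(1/p)·1_T) · Π_{t∈T}(1 - v_t^{1/λ_t})]^{-λ}. -/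
/-!
Put `uᵢ = vᵢ^(1/λᵢ)`, so that `θᵢ = (uᵢ⁻¹ - 1)/pᵢ`. Each marginal factor is
`(1 + pᵢθᵢ)^(-(λᵢ-λ)) = uᵢ^(λᵢ-λ) = vᵢ uᵢ^(-λ)`, so the Laplace transform equals
`v^[n] (P(θ) ∏ uᵢ)^(-λ)`. Since `θᵢuᵢ = -(uᵢ - 1)/pᵢ`, the multi-affine polynomial
`P(θ) ∏ uᵢ`, expanded in powers of `uᵢ - 1`, is
`∑_T P(-(1/p) 1_T) ∏_{t ∈ T} (u_t - 1)`; the terms with `|T| ≤ 1` add up to `1`,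
because `P(0) = 1` and the coefficient of `θᵢ` in `P` is `pᵢ`.
-/

open Finset

namespace Finset

theorem sum_eq_add_sum_one_lt_card {ι M : Type*} [Fintype ι] [AddCommMonoid M]
    (f : Finset ι → M) (h : ∀ a, f {a} = 0) :
    ∑ T, f T = f ∅ + ∑ T with 1 < T.card, f T := by
  rw [← sum_filter_not_add_sum_filter univ (fun T : Finset ι => 1 < T.card)]
  congr 1
  refine sum_eq_single_of_mem ∅ (by simp) fun T hT hne => ?_
  obtain ⟨a, rfl⟩ : ∃ a, T = {a} := by
    refine card_eq_one.mp (le_antisymm (not_lt.mp (mem_filter.mp hT).2) ?_)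
    exact card_pos.mpr (nonempty_iff_ne_empty.mpr hne)
  exact h a

variable {ι R : Type*} [Fintype ι] [DecidableEq ι] [CommSemiring R]

theorem sum_superset_prod_eq_prod_mul_prod_compl_add_one (S : Finset ι) (x : ι → R) :
    ∑ T with S ⊆ T, ∏ i ∈ T, x i = (∏ i ∈ S, x i) * ∏ i ∈ Sᶜ, (x i + 1) := by
  have hexpand : ∏ i ∈ Sᶜ, (x i + 1) = ∑ U ∈ Sᶜ.powerset, ∏ i ∈ U, x i := by
    simp [prod_add]
  rw [hexpand, mul_sum]
  refine sum_nbij' (· \ S) (S ∪ ·) ?_ ?_ ?_ ?_ ?_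
  · intro T _
    exact mem_powerset.mpr fun i hi => mem_compl.mpr (mem_sdiff.mp hi).2
  · intro U _
    simp
  · intro T hT
    exact union_sdiff_of_subset (mem_filter.mp hT).2
  · intro U hU
    have hdisj : Disjoint S U :=
      disjoint_left.mpr fun i hiS hiU => mem_compl.mp (mem_powerset.mp hU hiU) hiS
    exact union_sdiff_cancel_left hdisj
  · intro T hT
    exact (prod_sdiff (mem_filter.mp hT).2).symm.trans (mul_comm _ _)

theorem sum_mul_prod_mul_prod_compl_add_one (c : Finset ι → R) (x : ι → R) :
    ∑ S, c S * ((∏ i ∈ S, x i) * ∏ i ∈ Sᶜ, (x i + 1)) =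
      ∑ T, (∑ S ∈ T.powerset, c S) * ∏ i ∈ T, x i := by
  simp_rw [← sum_superset_prod_eq_prod_mul_prod_compl_add_one, mul_sum, sum_mul]
  exact sum_comm' fun S T => by simp

end Finset

section Multiaffine

variable {ι R : Type*} [Fintype ι] [DecidableEq ι] [CommSemiring R]

def multiaffine (p : Finset ι → R) (θ : ι → R) : R :=
  ∑ S, p S * ∏ i ∈ S, θ i

theorem multiaffine_ite_mem (p : Finset ι → R) (y : ι → R) (T : Finset ι) :
    multiaffine p (fun i => if i ∈ T then y i else 0) =
      ∑ S ∈ T.powerset, p S * ∏ i ∈ S, y i := by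
  rw [multiaffine, ← sum_subset (subset_univ T.powerset)]
  · refine sum_congr rfl fun S hS => ?_
    rw [prod_congr rfl fun i hi => if_pos (mem_powerset.mp hS hi)]
  · intro S _ hS
    obtain ⟨i, hiS, hiT⟩ := Finset.not_subset.mp (mt mem_powerset.mpr hS)
    rw [prod_eq_zero hiS (if_neg hiT), mul_zero]

theorem multiaffine_ite_mem_empty (p : Finset ι → R) (y : ι → R) :
    multiaffine p (fun i => if i ∈ (∅ : Finset ι) then y i else 0) = p ∅ := by
  rw [multiaffine_ite_mem]
  simp

theorem multiaffine_ite_mem_singleton (p : Finset ι → R) (y : ι → R) (a : ι) :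
    multiaffine p (fun i => if i ∈ ({a} : Finset ι) then y i else 0) = p ∅ + p {a} * y a := by
  have hpow : ({a} : Finset ι).powerset = {∅, {a}} := by
    ext S
    simp [subset_singleton_iff]
  rw [multiaffine_ite_mem, hpow, sum_pair (singleton_ne_empty a).symm]
  simp

end Multiaffine

section MultiaffineRing

variable {ι R : Type*} [Fintype ι] [DecidableEq ι] [CommRing R]

/-- Taylor expansion around `u = 1` of `P(θ) ∏ uᵢ`, which is multi-affine in `u` once `θᵢ uᵢ` is
affine in `uᵢ`. -/
theorem multiaffine_mul_prod_eq_sum_mul_prod_sub_one (p : Finset ι → R) (θ u y : ι → R)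
    (h : ∀ i, θ i * u i = y i * (u i - 1)) :
    multiaffine p θ * ∏ i, u i =
      ∑ T, multiaffine p (fun i => if i ∈ T then y i else 0) * ∏ i ∈ T, (u i - 1) := by
  have hterm : ∀ S : Finset ι, p S * (∏ i ∈ S, θ i) * ∏ i, u i =
      p S * (∏ i ∈ S, y i) * ((∏ i ∈ S, (u i - 1)) * ∏ i ∈ Sᶜ, (u i - 1 + 1)) := by
    intro S
    have hS :
        (∏ i ∈ S, θ i) * ∏ i ∈ S, u i = (∏ i ∈ S, y i) * ∏ i ∈ S, (u i - 1) := by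
      rw [← prod_mul_distrib, ← prod_mul_distrib]
      exact prod_congr rfl fun i _ => h i
    simp only [sub_add_cancel]
    rw [← prod_mul_prod_compl S u]
    linear_combination (p S * ∏ i ∈ Sᶜ, u i : R) * hS
  rw [multiaffine, sum_mul]
  simp_rw [hterm, multiaffine_ite_mem]
  exact sum_mul_prod_mul_prod_compl_add_one (fun S => p S * ∏ i ∈ S, y i) (fun i => u i - 1)

theorem multiaffine_inv_sub_one_div_mul_prod {K : Type*} [Field K] (p : Finset ι → K)
    (hpe : p ∅ = 1) (hpi : ∀ i, p {i} ≠ 0) (u : ι → K) (hu : ∀ i, u i ≠ 0) :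
    multiaffine p (fun i => ((u i)⁻¹ - 1) / p {i}) * ∏ i, u i =
      1 + ∑ T with 1 < T.card, (-1) ^ T.card *
        multiaffine p (fun i => if i ∈ T then -(1 / p {i}) else 0) * ∏ t ∈ T, (1 - u t) := by
  have hθ : ∀ i, ((u i)⁻¹ - 1) / p {i} * u i = -(1 / p {i}) * (u i - 1) := by
    intro i
    field_simp [hu i, hpi i]
    ring
  have hsingleton : ∀ a,
      multiaffine p (fun i => if i ∈ ({a} : Finset ι) then -(1 / p {i}) else 0) = 0 := by
    intro a
    rw [multiaffine_ite_mem_singleton, hpe, mul_neg, mul_one_div_cancel (hpi a), add_neg_cancel]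
  rw [multiaffine_mul_prod_eq_sum_mul_prod_sub_one p _ u _ hθ,
    sum_eq_add_sum_one_lt_card _ fun a => by rw [hsingleton, zero_mul],
    multiaffine_ite_mem_empty, hpe, Finset.prod_empty, mul_one]
  refine congrArg _ (sum_congr rfl fun T _ => ?_)
  have hsign : ∏ t ∈ T, (u t - 1) = (-1) ^ T.card * ∏ t ∈ T, (1 - u t) := by
    rw [← prod_neg]
    simp only [neg_sub]
  rw [hsign]
  ring

end MultiaffineRing

namespace Real

theorem mul_rpow_of_pos_right {x y : ℝ} (hy : 0 < y) (z : ℝ) :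
    (x * y) ^ z = x ^ z * y ^ z := by
  rcases le_or_gt 0 x with hx | hx
  · exact mul_rpow hx hy.le
  · rw [rpow_def_of_neg (mul_neg_of_neg_of_pos hx hy), rpow_def_of_neg hx, rpow_def_of_pos hy,
      log_mul hx.ne hy.ne', add_mul, exp_add]
    ring

theorem rpow_neg_one_div_rpow_neg_sub {v a b : ℝ} (hv : 0 < v) (ha : a ≠ 0) :
    (v ^ (-(1 / a))) ^ (-(a - b)) = v * (v ^ (1 / a)) ^ (-b) := by
  have hexp : -(1 / a) * -(a - b) = 1 + 1 / a * -b := by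
    field_simp
    ring
  rw [← rpow_mul hv.le, ← rpow_mul hv.le, hexp, rpow_add hv, rpow_one]

end Real

open Real Set

theorem laplace_copula_of_multifactor_gamma
    {n : ℕ} (p : Finset (Fin n) → ℝ) (lam : ℝ) (lami : Fin n → ℝ)
    (hpe : p ∅ = 1) (hpi : ∀ i : Fin n, 0 < p {i}) (hlam : 0 < lam)
    (hlami : ∀ i, lam ≤ lami i)
    (P : (Fin n → ℝ) → ℝ)
    (hP : ∀ θ : Fin n → ℝ, P θ = ∑ T : Finset (Fin n), p T * ∏ i ∈ T, θ i) :
    ∀ v : Fin n → ℝ, (∀ i, v i ∈ Ioc (0:ℝ) 1) →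
      (P (fun i => (v i ^ (-(1 / lami i)) - 1) / p {i})) ^ (-lam) *
          ∏ i : Fin n,
            (1 + p {i} * ((v i ^ (-(1 / lami i)) - 1) / p {i})) ^ (-(lami i - lam)) =
        (∏ i : Fin n, v i) *
          (1 + ∑ T ∈ Finset.univ.filter (fun T : Finset (Fin n) => 1 < T.card),
              (-1 : ℝ) ^ T.card *
                P (fun i => if i ∈ T then -(1 / p {i}) else 0) *
                ∏ t ∈ T, (1 - v t ^ (1 / lami t))) ^ (-lam) := by
  intro v hv
  obtain rfl : P = multiaffine p := funext hP
  have hv0 : ∀ i, 0 < v i := fun i => (hv i).1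
  have hlami0 : ∀ i, lami i ≠ 0 := fun i => (hlam.trans_le (hlami i)).ne'
  set u : Fin n → ℝ := fun i => v i ^ (1 / lami i)
  have hu0 : ∀ i, 0 < u i := fun i => rpow_pos_of_pos (hv0 i) _
  have hmarginal : ∀ i,
      (1 + p {i} * ((v i ^ (-(1 / lami i)) - 1) / p {i})) ^ (-(lami i - lam)) =
        v i * u i ^ (-lam) := fun i => by
    rw [mul_div_cancel₀ _ (hpi i).ne', add_sub_cancel,
      rpow_neg_one_div_rpow_neg_sub (hv0 i) (hlami0 i)]
  have hinv : ∀ i, v i ^ (-(1 / lami i)) = (u i)⁻¹ := fun i => rpow_neg (hv0 i).le _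
  rw [prod_congr rfl fun i _ => hmarginal i, prod_mul_distrib,
    finsetProd_rpow _ _ fun i _ => (hu0 i).le]
  simp only [hinv]
  rw [← multiaffine_inv_sub_one_div_mul_prod p hpe (fun i => (hpi i).ne') u fun i => (hu0 i).ne',
    mul_rpow_of_pos_right (prod_pos fun i _ => hu0 i)]
  ring
end

section
/- Let P(θ) = 1 + Σp_iθ_i + Σ_{i<j}p_{ij}θ_iθ_j + p₁₂₃θ₁θ₂θ₃ be an affine polynomial in 3 variables with p₁₂₃ ≠ 0, and set q₁ = (p₁+p₁₃θ₃)/(1+p₃θ₃), q₂ = (p₂+p₂₃θ₃)/(1+p₃θ₃), q₁₂ = (p₁₂+p₁₂₃θ₃)/(1+p₃θ₃). Then (-q₁₂ + q₁q₂)/q₁₂² = b̃₁₂ + b̃₁₂₃/(θ₃ - p̃₃) + b̃₁₃b̃₂₃/(θ₃ - p̃₃)², where p̃_T = -p_{T̄}/p₁₂₃ (T̄ the complement of T in {1,2,3}), b̃_{ij} = p̃_{ij} + p̃_i p̃_j, and b̃₁₂₃ = p̃₁₂₃ + p̃₁p̃₂₃ + p̃₂p̃₁₃ + p̃₃p̃₁₂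 + 2p̃₁p̃₂p̃₃. -/
/-!
Writing every coefficient of `P` through its dual, `p_{T̄} = -p₁₂₃ p̃_T`, the common factor
`-p₁₂₃` cancels from the three quotients, so `q₁ = (p̃₂₃ + p̃₂ θ₃) / (p̃₁₂₃ + p̃₁₂ θ₃)`,
`q₂ = (p̃₁₃ + p̃₁ θ₃) / (p̃₁₂₃ + p̃₁₂ θ₃)` and `q₁₂ = -(θ₃ - p̃₃) / (p̃₁₂₃ + p̃₁₂ θ₃)`.
The left-hand side is then a quadratic polynomial in `θ₃` divided by `(θ₃ - p̃₃)²`, and the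
coefficients of its expansion in powers of `θ₃ - p̃₃` are `b̃₁₃ b̃₂₃`, `b̃₁₂₃` and `b̃₁₂`.
-/

lemma add_mul_eq_neg_mul_of_eq_neg_div {K : Type*} [Field K] {a b c u v : K} (hc : c ≠ 0)
    (hu : u = -a / c) (hv : v = -b / c) (x : K) : a + b * x = -c * (u + v * x) := by
  subst hu hv
  field_simp
  ring

lemma neg_div_add_div_mul_div_div_sq {K : Type*} [Field K] {d : K} (hd : d ≠ 0) (a b n : K) :
    (-(n / d) + a / d * (b / d)) / (n / d) ^ 2 = (a * b - n * d) / n ^ 2 := by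
  by_cases hn : n = 0
  · simp [hn]
  · field_simp
    ring

lemma expand_in_powers_of_sub {R : Type*} [CommRing R] (a₁ a₂ a₃ a₁₂ a₁₃ a₂₃ a₁₂₃ x : R) :
    (a₂₃ + a₂ * x) * (a₁₃ + a₁ * x) + (x - a₃) * (a₁₂₃ + a₁₂ * x) =
      (a₁₃ + a₁ * a₃) * (a₂₃ + a₂ * a₃)
        + (a₁₂₃ + a₁ * a₂₃ + a₂ * a₁₃ + a₃ * a₁₂ + 2 * a₁ * a₂ * a₃) * (x - a₃)
        + (a₁₂ + a₁ * a₂) * (x - a₃) ^ 2 := by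
  ring

lemma div_sq_eq_add_div_add_div_sq {K : Type*} [Field K] {s : K} (hs : s ≠ 0) (a b c : K) :
    (a + b * s + c * s ^ 2) / s ^ 2 = c + b / s + a / s ^ 2 := by
  field_simp
  ring

theorem trivariate_rational_identity_general
    (p₁ p₂ p₃ p₁₂ p₁₃ p₂₃ p₁₂₃ θ₃ : ℝ)
    (hp : p₁₂₃ ≠ 0) (h1 : 1 + p₃ * θ₃ ≠ 0)
    (q₁ q₂ q₁₂ : ℝ)
    (hq₁ : q₁ = (p₁ + p₁₃ * θ₃) / (1 + p₃ * θ₃))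
    (hq₂ : q₂ = (p₂ + p₂₃ * θ₃) / (1 + p₃ * θ₃))
    (hq₁₂ : q₁₂ = (p₁₂ + p₁₂₃ * θ₃) / (1 + p₃ * θ₃))
    (tp₁ tp₂ tp₃ tp₁₂ tp₁₃ tp₂₃ tp₁₂₃ tb₁₂ tb₁₃ tb₂₃ tb₁₂₃ : ℝ)
    (htp₁ : tp₁ = -p₂₃ / p₁₂₃) (htp₂ : tp₂ = -p₁₃ / p₁₂₃) (htp₃ : tp₃ = -p₁₂ / p₁₂₃)
    (htp₁₂ : tp₁₂ = -p₃ / p₁₂₃) (htp₁₃ : tp₁₃ = -p₂ / p₁₂₃) (htp₂₃ : tp₂₃ = -p₁ / p₁₂₃)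
    (htp₁₂₃ : tp₁₂₃ = -1 / p₁₂₃)
    (htb₁₂ : tb₁₂ = tp₁₂ + tp₁ * tp₂)
    (htb₁₃ : tb₁₃ = tp₁₃ + tp₁ * tp₃)
    (htb₂₃ : tb₂₃ = tp₂₃ + tp₂ * tp₃)
    (htb₁₂₃ : tb₁₂₃ = tp₁₂₃ + tp₁ * tp₂₃ + tp₂ * tp₁₃ + tp₃ * tp₁₂ + 2 * tp₁ * tp₂ * tp₃)
    (hθ : θ₃ ≠ tp₃) :
    (-q₁₂ + q₁ * q₂) / q₁₂ ^ 2 =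
      tb₁₂ + tb₁₂₃ / (θ₃ - tp₃) + tb₁₃ * tb₂₃ / (θ₃ - tp₃) ^ 2 := by
  have hc : -p₁₂₃ ≠ 0 := neg_ne_zero.2 hp
  have hq₁' := add_mul_eq_neg_mul_of_eq_neg_div hp htp₂₃ htp₂ θ₃
  have hq₂' := add_mul_eq_neg_mul_of_eq_neg_div hp htp₁₃ htp₁ θ₃
  have hd := add_mul_eq_neg_mul_of_eq_neg_div hp htp₁₂₃ htp₁₂ θ₃
  have hn : p₁₂ + p₁₂₃ * θ₃ = -p₁₂₃ * -(θ₃ - tp₃) := by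
    rw [htp₃]
    field_simp
    ring
  have hd0 : tp₁₂₃ + tp₁₂ * θ₃ ≠ 0 := right_ne_zero_of_mul (hd ▸ h1)
  rw [hq₁, hq₂, hq₁₂, hq₁', hq₂', hd, hn, mul_div_mul_left _ _ hc, mul_div_mul_left _ _ hc,
    mul_div_mul_left _ _ hc, neg_div_add_div_mul_div_div_sq hd0, neg_sq, neg_mul, sub_neg_eq_add,
    expand_in_powers_of_sub, div_sq_eq_add_div_add_div_sq (sub_ne_zero.2 hθ),
    htb₁₂, htb₁₃, htb₂₃, htb₁₂₃]

theorem trivariate_rational_identity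
    (p₁ p₂ p₃ p₁₂ p₁₃ p₂₃ p₁₂₃ θ₃ : ℝ)
    (hp : p₁₂₃ ≠ 0) (h1 : 1 + p₃ * θ₃ ≠ 0)
    (q₁ q₂ q₁₂ : ℝ)
    (hq₁ : q₁ = (p₁ + p₁₃ * θ₃) / (1 + p₃ * θ₃))
    (hq₂ : q₂ = (p₂ + p₂₃ * θ₃) / (1 + p₃ * θ₃))
    (hq₁₂ : q₁₂ = (p₁₂ + p₁₂₃ * θ₃) / (1 + p₃ * θ₃))
    (hq₁₂ne : q₁₂ ≠ 0)
    (tp₁ tp₂ tp₃ tp₁₂ tp₁₃ tp₂₃ tp₁₂₃ tb₁₂ tb₁₃ tb₂₃ tb₁₂₃ : ℝ)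
    (htp₁ : tp₁ = -p₂₃ / p₁₂₃) (htp₂ : tp₂ = -p₁₃ / p₁₂₃) (htp₃ : tp₃ = -p₁₂ / p₁₂₃)
    (htp₁₂ : tp₁₂ = -p₃ / p₁₂₃) (htp₁₃ : tp₁₃ = -p₂ / p₁₂₃) (htp₂₃ : tp₂₃ = -p₁ / p₁₂₃)
    (htp₁₂₃ : tp₁₂₃ = -1 / p₁₂₃)
    (htb₁₂ : tb₁₂ = tp₁₂ + tp₁ * tp₂)
    (htb₁₃ : tb₁₃ = tp₁₃ + tp₁ * tp₃)
    (htb₂₃ : tb₂₃ = tp₂₃ + tp₂ * tp₃)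
    (htb₁₂₃ : tb₁₂₃ = tp₁₂₃ + tp₁ * tp₂₃ + tp₂ * tp₁₃ + tp₃ * tp₁₂ + 2 * tp₁ * tp₂ * tp₃)
    (hθ : θ₃ ≠ tp₃) :
    (-q₁₂ + q₁ * q₂) / q₁₂ ^ 2 =
      tb₁₂ + tb₁₂₃ / (θ₃ - tp₃) + tb₁₃ * tb₂₃ / (θ₃ - tp₃) ^ 2 :=
  trivariate_rational_identity_general p₁ p₂ p₃ p₁₂ p₁₃ p₂₃ p₁₂₃ θ₃ hp h1 q₁ q₂ q₁₂ hq₁ hq₂ hq₁₂ tp₁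
    tp₂ tp₃ tp₁₂ tp₁₃ tp₂₃ tp₁₂₃ tb₁₂ tb₁₃ tb₂₃ tb₁₂₃ htp₁ htp₂ htp₃ htp₁₂ htp₁₃ htp₂₃ htp₁₂₃ htb₁₂
    htb₁₃ htb₂₃ htb₁₂₃ hθ
end
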